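/- arXiv:2106.14671 — 2 statements merged into one kernel-verified Lean document; each statement's English description precedes it below -/
import Mathlib

section
/- Under the randomized antenna/sub-carrier selection model, the absolute value of the expected ambiguity function satisfies |E{χ(δf_r, δf_v, δf_θ)}| = (K/(MP)) · |sin(Mπδf_r)/sin(πδf_r)| · |sin(Nπδf_v)/sin(πδf_v)| · |sin(PQ_rπδf_θ)/sin(πδf_θ)|, for δf_r, δf_v, δf_θ real numbers that are not integers. -/
/-!
The randomization enters only through the pair `(m_{n,k}, p_{n,k})` of a single pulse and slot,
and this pair is uniform on `Fin M × Fin P`: the uniform distribution on embeddings (and on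
functions) is invariant under permutations of the codomain, and evaluation at a point is
equivariant. Hence `E χ` is `K` times the product of the averages of the sub-carrier and
antenna phases, times the pulse and sub-band phase sums. The antenna and sub-band sums merge into
one geometric sum of length `P Q_r`, and `|∑_{m<M} e^{-2πi m x}| = |sin (M π x) / sin (π x)|`
for `x` not an integer, since `|e^{iθ} - 1| = 2 |sin (θ / 2)|`.
-/

open Finset

/-- The FRaC ambiguity function for a given realization `sel` of the random
antenna/sub-carrier selections (one independent selection per pulse). -/
noncomputable def chi (N K M P Qr : ℕ)
    (sel : Fin N → (Fin K ↪ Fin M) × (Fin K ↪ Fin P))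
    (fr fv fθ : ℝ) : ℂ :=
  ∑ n : Fin N, ∑ k : Fin K, ∑ q : Fin Qr,
    Complex.exp (-Complex.I * (2 * Real.pi *
      ((((sel n).1 k : ℕ) : ℝ) * fr + (n : ℝ) * fv +
        ((Qr : ℝ) * (((sel n).2 k : ℕ) : ℝ) + (q : ℝ)) * fθ)))

open Complex
open scoped BigOperators

section Equivariant

variable {G X β K : Type*} [Group G] [MulAction G X] [MulAction G β]
  [MulAction.IsPretransitive G β] [Fintype X] [DecidableEq β]

theorem card_fiber_eq_of_equivariant {φ : X → β} (hφ : ∀ (g : G) x, φ (g • x) = g • φ x)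
    (b b' : β) : #{x | φ x = b} = #{x | φ x = b'} := by
  obtain ⟨g, rfl⟩ := MulAction.exists_smul_eq G b b'
  refine card_nbij' (g • ·) (g⁻¹ • ·) ?_ ?_ (fun x _ => inv_smul_smul g x)
    (fun x _ => smul_inv_smul g x) <;>
  · intro x hx
    simp_all

theorem expect_comp_eq_of_equivariant [Fintype β] [Semifield K] [CharZero K] [Nonempty X]
    {φ : X → β} (hφ : ∀ (g : G) x, φ (g • x) = g • φ x) (f : β → K) :
    𝔼 x, f (φ x) = 𝔼 b, f b := by
  obtain ⟨x₀⟩ := ‹Nonempty X›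
  set c := #{x | φ x = φ x₀}
  have hfiber (b : β) : #{x | φ x = b} = c := card_fiber_eq_of_equivariant hφ b (φ x₀)
  have hc : (c : K) ≠ 0 := Nat.cast_ne_zero.mpr (card_ne_zero_of_mem (by simp : x₀ ∈ _))
  have hcard : Fintype.card X = Fintype.card β * c := by
    rw [← card_univ, card_eq_sum_card_fiberwise (f := φ) fun _ _ => mem_univ _]
    simp [hfiber]
  have hsum : ∑ x, f (φ x) = c * ∑ b, f b := by
    rw [← sum_fiberwise univ φ, mul_sum]
    refine sum_congr rfl fun b _ => ?_
    rw [sum_congr rfl fun x hx => by rw [(mem_filter.mp hx).2], sum_const, hfiber, nsmul_eq_mul]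
  rw [Fintype.expect_eq_sum_div_card, Fintype.expect_eq_sum_div_card, hsum, hcard]
  push_cast
  rw [mul_comm (Fintype.card β : K), mul_div_mul_left _ _ hc]

end Equivariant

section Selection

variable {ι α β γ K : Type*} [Fintype ι] [DecidableEq ι] [Fintype α]
  [Fintype β] [DecidableEq β] [Fintype γ] [DecidableEq γ] [Semifield K] [CharZero K]

theorem expect_embedding_apply [Nonempty (α ↪ β)] (a : α) (f : β → K) :
    𝔼 e : α ↪ β, f (e a) = 𝔼 b, f b :=
  expect_comp_eq_of_equivariant (G := Equiv.Perm β) (fun σ e => e.smul_apply σ a) f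

theorem expect_pi_eval [Nonempty β] (i : ι) (f : β → K) :
    𝔼 s : ι → β, f (s i) = 𝔼 b, f b :=
  expect_comp_eq_of_equivariant (G := Equiv.Perm β) (fun _ _ => rfl) f

theorem expect_selection_mul [Nonempty (α ↪ β)] [Nonempty (α ↪ γ)] (f : β → K) (g : γ → K)
    (i : ι) (a : α) :
    𝔼 sel : ι → (α ↪ β) × (α ↪ γ), f ((sel i).1 a) * g ((sel i).2 a) =
      (𝔼 b, f b) * 𝔼 c, g c := by
  rw [expect_pi_eval i fun e : (α ↪ β) × (α ↪ γ) => f (e.1 a) * g (e.2 a), ← univ_product_univ,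
    expect_product' univ univ fun (e₁ : α ↪ β) (e₂ : α ↪ γ) => f (e₁ a) * g (e₂ a),
    ← Fintype.expect_mul_expect, expect_embedding_apply, expect_embedding_apply]

end Selection

noncomputable def phaseSum (M : ℕ) (x : ℝ) : ℂ :=
  ∑ m : Fin M, exp (-I * (2 * Real.pi * ((m : ℝ) * x)))

theorem phaseSum_eq_geom_sum (M : ℕ) (x : ℝ) :
    phaseSum M x = ∑ m ∈ range M, exp (-I * (2 * Real.pi * x)) ^ m := by
  rw [phaseSum, Fin.sum_univ_eq_sum_range (fun m => exp (-I * (2 * Real.pi * ((m : ℝ) * x))))]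
  refine sum_congr rfl fun m _ => ?_
  rw [← exp_nat_mul]
  push_cast
  ring_nf

theorem norm_exp_neg_two_pi_I_mul_sub_one (x : ℝ) :
    ‖exp (-I * (2 * Real.pi * x)) - 1‖ = 2 * |Real.sin (Real.pi * x)| := by
  have h := norm_exp_I_mul_ofReal_sub_one (-(2 * Real.pi * x))
  push_cast at h
  rw [show -I * (2 * Real.pi * x) = I * -(2 * Real.pi * x) by ring, h,
    show -(2 * Real.pi * x) / 2 = -(Real.pi * x) by ring, Real.sin_neg]
  simp

theorem exp_neg_two_pi_I_mul_ne_one {x : ℝ} (hx : ∀ n : ℤ, x ≠ n) :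
    exp (-I * (2 * Real.pi * x)) ≠ 1 := by
  rw [Ne, exp_eq_one_iff]
  rintro ⟨n, hn⟩
  apply hx (-n)
  have h : ((x : ℂ) + n) * (2 * Real.pi * I) = 0 := by linear_combination -hn
  simp only [mul_eq_zero, Real.pi_ne_zero, I_ne_zero, ofReal_eq_zero, OfNat.ofNat_ne_zero,
    or_false] at h
  push_cast
  exact_mod_cast eq_neg_of_add_eq_zero_left h

theorem norm_phaseSum (M : ℕ) {x : ℝ} (hx : ∀ n : ℤ, x ≠ n) :
    ‖phaseSum M x‖ = |Real.sin (M * Real.pi * x) / Real.sin (Real.pi * x)| := by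
  rw [phaseSum_eq_geom_sum, geom_sum_eq (exp_neg_two_pi_I_mul_ne_one hx), norm_div,
    ← exp_nat_mul, show (M : ℂ) * (-I * (2 * Real.pi * x)) =
      -I * (2 * Real.pi * ((M * x : ℝ) : ℂ)) by push_cast; ring,
    norm_exp_neg_two_pi_I_mul_sub_one, norm_exp_neg_two_pi_I_mul_sub_one, abs_div]
  ring_nf

theorem phaseSum_mul_phaseSum (P Q : ℕ) (x : ℝ) :
    phaseSum P (Q * x) * phaseSum Q x = phaseSum (P * Q) x := by
  rw [phaseSum, phaseSum, sum_mul_sum, ← Fintype.sum_prod_type', phaseSum]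
  refine Fintype.sum_equiv finProdFinEquiv _ _ fun pq => ?_
  rw [← exp_add, finProdFinEquiv_apply_val]
  push_cast
  ring_nf

theorem expect_chi (N K M P Qr : ℕ) (hKM : K ≤ M) (hKP : K ≤ P) (fr fv fθ : ℝ) :
    𝔼 sel, chi N K M P Qr sel fr fv fθ =
      K / (M * P) * phaseSum M fr * phaseSum N fv * phaseSum (P * Qr) fθ := by
  have : Nonempty (Fin K ↪ Fin M) := ⟨Fin.castLEEmb hKM⟩
  have : Nonempty (Fin K ↪ Fin P) := ⟨Fin.castLEEmb hKP⟩
  have hphase (m n p q : ℝ) :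
      exp (-I * (2 * Real.pi * (m * fr + n * fv + ((Qr : ℝ) * p + q) * fθ))) =
        exp (-I * (2 * Real.pi * (m * fr))) * exp (-I * (2 * Real.pi * (p * ((Qr : ℝ) * fθ)))) *
          (exp (-I * (2 * Real.pi * (n * fv))) * exp (-I * (2 * Real.pi * (q * fθ)))) := by
    simp only [← exp_add]
    push_cast
    ring_nf
  simp only [chi, hphase, expect_sum_comm, ← expect_mul,
    expect_selection_mul (fun m : Fin M => exp (-I * (2 * Real.pi * ((m : ℝ) * fr))))
      (fun p : Fin P => exp (-I * (2 * Real.pi * ((p : ℝ) * ((Qr : ℝ) * fθ)))))]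
  rw [← phaseSum_mul_phaseSum]
  simp only [← mul_sum, ← sum_mul, sum_const, card_univ, Fintype.card_fin, nsmul_eq_mul,
    Fintype.expect_eq_sum_div_card, phaseSum]
  push_cast
  ring

theorem stmt_4_general (N K M P Qr : ℕ) (hKM : K ≤ M) (hKP : K ≤ P)
    (fr fv fθ : ℝ) (hfr : ∀ n : ℤ, fr ≠ n) (hfv : ∀ n : ℤ, fv ≠ n)
    (hfθ : ∀ n : ℤ, fθ ≠ n) :
    ‖
        (((Fintype.card (Fin N → (Fin K ↪ Fin M) × (Fin K ↪ Fin P)) : ℕ) : ℂ)⁻¹ *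
          ∑ sel : Fin N → (Fin K ↪ Fin M) × (Fin K ↪ Fin P),
            chi N K M P Qr sel fr fv fθ)‖ =
      (K : ℝ) / ((M : ℝ) * P) *
        |Real.sin (M * Real.pi * fr) / Real.sin (Real.pi * fr)| *
        |Real.sin (N * Real.pi * fv) / Real.sin (Real.pi * fv)| *
        |Real.sin ((P * Qr : ℕ) * Real.pi * fθ) / Real.sin (Real.pi * fθ)| := by
  rw [inv_mul_eq_div, ← Fintype.expect_eq_sum_div_card, expect_chi N K M P Qr hKM hKP,
    norm_mul, norm_mul, norm_mul, norm_phaseSum M hfr, norm_phaseSum N hfv,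
    norm_phaseSum (P * Qr) hfθ]
  simp only [norm_div, norm_mul, norm_natCast]

theorem stmt_4 (N K M P Qr : ℕ) (hN : 0 < N) (hK : 0 < K) (hM : 0 < M)
    (hP : 0 < P) (hQr : 0 < Qr) (hKM : K ≤ M) (hKP : K ≤ P)
    (fr fv fθ : ℝ) (hfr : ∀ n : ℤ, fr ≠ n) (hfv : ∀ n : ℤ, fv ≠ n)
    (hfθ : ∀ n : ℤ, fθ ≠ n) :
    ‖
        (((Fintype.card (Fin N → (Fin K ↪ Fin M) × (Fin K ↪ Fin P)) : ℕ) : ℂ)⁻¹ *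
          ∑ sel : Fin N → (Fin K ↪ Fin M) × (Fin K ↪ Fin P),
            chi N K M P Qr sel fr fv fθ)‖ =
      (K : ℝ) / ((M : ℝ) * P) *
        |Real.sin (M * Real.pi * fr) / Real.sin (Real.pi * fr)| *
        |Real.sin (N * Real.pi * fv) / Real.sin (Real.pi * fv)| *
        |Real.sin ((P * Qr : ℕ) * Real.pi * fθ) / Real.sin (Real.pi * fθ)| :=
  stmt_4_general N K M P Qr hKM hKP fr fv fθ hfr hfv hfθ
end

section
/- The expected ambiguity function E{χ(δf_r, δf_v, δf_θ)} equals (K/(MP)) · e^{-jπ((M-1)δf_r + (N-1)δf_v + (PQ_r-1)δf_θ)} · [sin(Mπδf_r)/sin(πδf_r)] · [sin(Nπδf_v)/sin(πδf_v)] · [sin(PQ_rπδf_θ)/sin(πδf_θ)] for non-integer arguments. -/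
/-
For every pulse `n` and slot `k`, the pair of indices `(m_{n,k}, p_{n,k})` is uniformly
distributed on `Fin M × Fin P`: swapping antenna (resp. sub-carrier) labels is a bijection of
the selection space that acts transitively on these pairs, so all fibres of the evaluation map
have the same size. Averaging therefore replaces each term of `χ` by its mean over
`Fin M × Fin P`, and the resulting sum factors into three geometric sums of roots of unity;
the `p` and `q` sums merge into one over `Q_r p + q < P Q_r`. Each geometric sum is a Dirichlet
kernel `e^{-jπ(L-1)f} sin(Lπf) / sin(πf)`.
-/

open Finset

theorem card_filter_eq_of_equivariant {α β : Type*} [Fintype α] [DecidableEq β] (π : α → β)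
    (E : α ≃ α) (σ : β ≃ β) (hE : ∀ a, π (E a) = σ (π a)) (b : β) :
    #{a | π a = σ b} = #{a | π a = b} :=
  card_nbij' E.symm E
    (fun a ha => by
      simp only [coe_filter, mem_univ, true_and, Set.mem_ofPred_eq] at ha ⊢
      rw [← σ.injective.eq_iff, ← hE, E.apply_symm_apply, ha])
    (fun a ha => by
      simp only [coe_filter, mem_univ, true_and, Set.mem_ofPred_eq] at ha ⊢
      rw [hE, ha])
    (fun a _ => E.apply_symm_apply a) (fun a _ => E.symm_apply_apply a)

theorem sum_comp_eq_sum_card_filter_nsmul {α β R : Type*} [Fintype α] [Fintype β]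
    [DecidableEq β] [AddCommMonoid R] (π : α → β) (f : β → R) :
    ∑ a, f (π a) = ∑ b, #{a | π a = b} • f b := by
  rw [← sum_fiberwise univ π]
  refine sum_congr rfl fun b _ => ?_
  rw [sum_congr rfl fun a ha => by rw [(mem_filter.1 ha).2], sum_const]

/-- Equivariance under a family of permutations that is transitive on `β` makes all fibres of `π`
equally large. -/
theorem card_nsmul_sum_comp_of_transitive {α β R : Type*} [Fintype α] [Fintype β]
    [DecidableEq β] [AddCommMonoid R] (π : α → β)
    (hπ : ∀ b b', ∃ E : α ≃ α, ∃ σ : β ≃ β, σ b = b' ∧ ∀ a, π (E a) = σ (π a))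
    (f : β → R) :
    Fintype.card β • ∑ a, f (π a) = Fintype.card α • ∑ b, f b := by
  have hfiber : ∀ b b', #{a | π a = b} = #{a | π a = b'} := by
    intro b b'
    obtain ⟨E, σ, rfl, hE⟩ := hπ b b'
    exact (card_filter_eq_of_equivariant π E σ hE b).symm
  calc Fintype.card β • ∑ a, f (π a)
      = ∑ b' : β, ∑ b, #{a | π a = b'} • f b := by
        rw [sum_comp_eq_sum_card_filter_nsmul, ← card_univ, ← sum_const]
        exact sum_congr rfl fun b' _ => sum_congr rfl fun b _ => by rw [hfiber b b']
    _ = Fintype.card α • ∑ b, f b := by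
        simp_rw [← smul_sum, ← sum_smul]
        rw [← card_eq_sum_card_fiberwise (fun _ _ => mem_univ _), card_univ]

theorem card_nsmul_sum_eval_selection {ι κ A B R : Type*} [Fintype ι] [DecidableEq ι]
    [Fintype κ] [DecidableEq κ] [Fintype A] [DecidableEq A] [Fintype B] [DecidableEq B]
    [AddCommMonoid R] (i : ι) (k : κ) (f : A × B → R) :
    Fintype.card (A × B) • ∑ sel : ι → (κ ↪ A) × (κ ↪ B), f ((sel i).1 k, (sel i).2 k) =
      Fintype.card (ι → (κ ↪ A) × (κ ↪ B)) • ∑ x, f x := by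
  refine card_nsmul_sum_comp_of_transitive
    (fun sel : ι → (κ ↪ A) × (κ ↪ B) => ((sel i).1 k, (sel i).2 k)) ?_ f
  rintro ⟨a, b⟩ ⟨a', b'⟩
  let σA := Equiv.swap a a'
  let σB := Equiv.swap b b'
  refine ⟨Equiv.arrowCongr (Equiv.refl ι)
      ((Equiv.embeddingCongr (Equiv.refl κ) σA).prodCongr
        (Equiv.embeddingCongr (Equiv.refl κ) σB)),
    σA.prodCongr σB, by simp [σA, σB], fun sel => ?_⟩
  simp [Equiv.embeddingCongr]

theorem Complex.geom_sum_exp_mul_sin (L : ℕ) (x : ℂ) :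
    (∑ j ∈ range L, exp (2 * j * x * I)) * sin x = exp ((L - 1) * x * I) * sin (L * x) := by
  obtain ⟨u, hu⟩ : ∃ u, exp (x * I) = u := ⟨_, rfl⟩
  have hu0 : u ≠ 0 := hu ▸ exp_ne_zero _
  have hpow : ∀ t : ℕ, exp (t * x * I) = u ^ t := fun t => by
    rw [← hu, ← exp_nat_mul]; ring_nf
  have hgeom := geom_sum_mul (u ^ 2) L
  simp_rw [← pow_mul] at hgeom
  rw [sin, sin, sum_congr rfl fun (j : ℕ) _ => show exp (2 * (j : ℂ) * x * I) = u ^ (2 * j) by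
      rw [← hpow]; push_cast; ring_nf,
    show ((L : ℂ) - 1) * x * I = L * x * I - x * I by ring, exp_sub, neg_mul, neg_mul, exp_neg,
    exp_neg, hpow, hu]
  field_simp
  linear_combination (-1) * hgeom

theorem Real.sin_pi_mul_ne_zero_of_forall_ne_intCast {f : ℝ} (hf : ∀ n : ℤ, f ≠ n) :
    Real.sin (Real.pi * f) ≠ 0 := by
  rw [Ne, Real.sin_eq_zero_iff, not_exists]
  intro n hn
  exact hf n (mul_left_cancel₀ Real.pi_ne_zero (by rw [← hn, mul_comm])).symm

open Complex in
theorem sum_range_exp_neg_two_pi_mul (L : ℕ) {f : ℝ} (hf : ∀ n : ℤ, f ≠ n) :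
    ∑ j ∈ range L, exp (-I * (2 * Real.pi * (j * f))) =
      exp (-I * (Real.pi * ((L - 1) * f))) *
        ((Real.sin (L * Real.pi * f) / Real.sin (Real.pi * f) : ℝ) : ℂ) := by
  have hsin : (Real.sin (Real.pi * f) : ℂ) ≠ 0 :=
    ofReal_ne_zero.2 (Real.sin_pi_mul_ne_zero_of_forall_ne_intCast hf)
  have h := geom_sum_exp_mul_sin L (-(Real.pi * f))
  have hx : sin (-(Real.pi * f : ℂ)) = -(Real.sin (Real.pi * f) : ℂ) := by
    rw [sin_neg, ofReal_sin]; push_cast; rfl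
  have hLx : sin ((L : ℂ) * -(Real.pi * f)) = -(Real.sin (L * Real.pi * f) : ℂ) := by
    rw [mul_neg, sin_neg, ofReal_sin]; push_cast; ring_nf
  rw [hx, hLx, mul_neg, mul_neg, neg_inj] at h
  rw [ofReal_div, mul_div_assoc', eq_div_iff hsin]
  convert h using 2
  · exact sum_congr rfl fun (j : ℕ) _ => by congr 1; ring
  · congr 1; ring

theorem sum_fin_mul_add_eq_sum_range {R : Type*} [AddCommMonoid R] (P Q : ℕ) (g : ℕ → R) :
    ∑ p : Fin P, ∑ q : Fin Q, g (Q * p + q) = ∑ j ∈ range (P * Q), g j := by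
  rw [← Fin.sum_univ_eq_sum_range, ← Fintype.sum_prod_type']
  exact Fintype.sum_equiv finProdFinEquiv _ _ fun x => by simp [add_comm]

theorem mul_sum_chi (N K M P Qr : ℕ) (fr fv fθ : ℝ) :
    ((M * P : ℕ) : ℂ) * ∑ sel, chi N K M P Qr sel fr fv fθ =
      K * Fintype.card (Fin N → (Fin K ↪ Fin M) × (Fin K ↪ Fin P)) *
        ∑ n : Fin N, ∑ b : Fin M × Fin P, ∑ q : Fin Qr,
          Complex.exp (-Complex.I * (2 * Real.pi *
            (((b.1 : ℕ) : ℝ) * fr + (n : ℝ) * fv + ((Qr : ℝ) * ((b.2 : ℕ) : ℝ) + (q : ℝ)) * fθ))) := by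
  let g : Fin N → Fin M × Fin P → ℂ := fun n b => ∑ q : Fin Qr,
    Complex.exp (-Complex.I * (2 * Real.pi *
      (((b.1 : ℕ) : ℝ) * fr + (n : ℝ) * fv + ((Qr : ℝ) * ((b.2 : ℕ) : ℝ) + (q : ℝ)) * fθ)))
  have hsel : ∀ n k, ((M * P : ℕ) : ℂ) * ∑ sel : Fin N → (Fin K ↪ Fin M) × (Fin K ↪ Fin P),
      g n ((sel n).1 k, (sel n).2 k) =
      Fintype.card (Fin N → (Fin K ↪ Fin M) × (Fin K ↪ Fin P)) * ∑ b, g n b := fun n k => by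
    simpa only [nsmul_eq_mul, Fintype.card_prod, Fintype.card_fin, Nat.cast_mul]
      using card_nsmul_sum_eval_selection n k (g n)
  calc ((M * P : ℕ) : ℂ) * ∑ sel, chi N K M P Qr sel fr fv fθ
      = ((M * P : ℕ) : ℂ) * ∑ n, ∑ k : Fin K,
          ∑ sel : Fin N → (Fin K ↪ Fin M) × (Fin K ↪ Fin P), g n ((sel n).1 k, (sel n).2 k) :=
        congrArg _ (sum_comm.trans (sum_congr rfl fun n _ => sum_comm))
    _ = ∑ n, ∑ _k : Fin K,
          (Fintype.card (Fin N → (Fin K ↪ Fin M) × (Fin K ↪ Fin P)) : ℂ) * ∑ b, g n b := by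
        rw [mul_sum]
        exact sum_congr rfl fun n _ => by rw [mul_sum]; exact sum_congr rfl fun k _ => hsel n k
    _ = _ := by
        simp only [sum_const, card_univ, Fintype.card_fin, nsmul_eq_mul, ← mul_sum]
        exact (mul_assoc _ _ _).symm

open Complex in
theorem sum_exp_eq_mul (N M P Qr : ℕ) (fr fv fθ : ℝ) :
    ∑ n : Fin N, ∑ b : Fin M × Fin P, ∑ q : Fin Qr,
      exp (-I * (2 * Real.pi *
        (((b.1 : ℕ) : ℝ) * fr + (n : ℝ) * fv + ((Qr : ℝ) * ((b.2 : ℕ) : ℝ) + (q : ℝ)) * fθ))) =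
      (∑ j ∈ range N, exp (-I * (2 * Real.pi * (j * fv)))) *
        ((∑ j ∈ range M, exp (-I * (2 * Real.pi * (j * fr)))) *
          ∑ j ∈ range (P * Qr), exp (-I * (2 * Real.pi * (j * fθ)))) := by
  have hsplit : ∀ (n : Fin N) (b : Fin M × Fin P) (q : Fin Qr),
      exp (-I * (2 * Real.pi *
        (((b.1 : ℕ) : ℝ) * fr + (n : ℝ) * fv + ((Qr : ℝ) * ((b.2 : ℕ) : ℝ) + (q : ℝ)) * fθ))) =
      exp (-I * (2 * Real.pi * ((n : ℕ) * fv))) * (exp (-I * (2 * Real.pi * ((b.1 : ℕ) * fr))) *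
        exp (-I * (2 * Real.pi * ((Qr * b.2 + q : ℕ) * fθ)))) := fun n b q => by
    rw [← exp_add, ← exp_add]; push_cast; ring_nf
  rw [← sum_fin_mul_add_eq_sum_range P Qr, ← Fin.sum_univ_eq_sum_range, ← Fin.sum_univ_eq_sum_range]
  simp only [hsplit, Fintype.sum_prod_type, ← mul_sum, ← sum_mul]

theorem stmt_5_general (N K M P Qr : ℕ) (hM : 0 < M)
    (hP : 0 < P) (hKM : K ≤ M) (hKP : K ≤ P)
    (fr fv fθ : ℝ) (hfr : ∀ n : ℤ, fr ≠ n) (hfv : ∀ n : ℤ, fv ≠ n)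
    (hfθ : ∀ n : ℤ, fθ ≠ n) :
    ((Fintype.card (Fin N → (Fin K ↪ Fin M) × (Fin K ↪ Fin P)) : ℕ) : ℂ)⁻¹ *
        (∑ sel : Fin N → (Fin K ↪ Fin M) × (Fin K ↪ Fin P),
          chi N K M P Qr sel fr fv fθ) =
      ((K : ℂ) / ((M : ℂ) * P)) *
        Complex.exp (-Complex.I * (Real.pi *
          (((M : ℝ) - 1) * fr + ((N : ℝ) - 1) * fv + (((P * Qr : ℕ) : ℝ) - 1) * fθ))) *
        ((Real.sin (M * Real.pi * fr) / Real.sin (Real.pi * fr) : ℝ) : ℂ) *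
        ((Real.sin (N * Real.pi * fv) / Real.sin (Real.pi * fv) : ℝ) : ℂ) *
        ((Real.sin ((P * Qr : ℕ) * Real.pi * fθ) / Real.sin (Real.pi * fθ) : ℝ) : ℂ) := by
  have : Nonempty (Fin K ↪ Fin M) := Function.Embedding.nonempty_of_card_le (by simpa)
  have : Nonempty (Fin K ↪ Fin P) := Function.Embedding.nonempty_of_card_le (by simpa)
  have hΩ : (Fintype.card (Fin N → (Fin K ↪ Fin M) × (Fin K ↪ Fin P)) : ℂ) ≠ 0 :=
    Nat.cast_ne_zero.2 Fintype.card_ne_zero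
  have hM' : (M : ℂ) ≠ 0 := Nat.cast_ne_zero.2 hM.ne'
  have hP' : (P : ℂ) ≠ 0 := Nat.cast_ne_zero.2 hP.ne'
  have hsum := mul_sum_chi N K M P Qr fr fv fθ
  rw [sum_exp_eq_mul, sum_range_exp_neg_two_pi_mul N hfv, sum_range_exp_neg_two_pi_mul M hfr,
    sum_range_exp_neg_two_pi_mul (P * Qr) hfθ, Nat.cast_mul] at hsum
  have hexp : Complex.exp (-Complex.I * (Real.pi *
      (((M : ℝ) - 1) * fr + ((N : ℝ) - 1) * fv + (((P * Qr : ℕ) : ℝ) - 1) * fθ))) =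
      Complex.exp (-Complex.I * (Real.pi * ((M - 1) * fr))) *
        Complex.exp (-Complex.I * (Real.pi * ((N - 1) * fv))) *
        Complex.exp (-Complex.I * (Real.pi * ((((P * Qr : ℕ) : ℂ) - 1) * fθ))) := by
    rw [← Complex.exp_add, ← Complex.exp_add]; push_cast; ring_nf
  have hdiv : ∀ {S Y : ℂ},
      (M * P : ℂ) * S = K * Fintype.card (Fin N → (Fin K ↪ Fin M) × (Fin K ↪ Fin P)) * Y →
      (Fintype.card (Fin N → (Fin K ↪ Fin M) × (Fin K ↪ Fin P)) : ℂ)⁻¹ * S = K / (M * P) * Y := by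
    intro S Y h
    field_simp
    linear_combination h
  rw [hdiv hsum, hexp]
  ring

theorem stmt_5 (N K M P Qr : ℕ) (hN : 0 < N) (hK : 0 < K) (hM : 0 < M)
    (hP : 0 < P) (hQr : 0 < Qr) (hKM : K ≤ M) (hKP : K ≤ P)
    (fr fv fθ : ℝ) (hfr : ∀ n : ℤ, fr ≠ n) (hfv : ∀ n : ℤ, fv ≠ n)
    (hfθ : ∀ n : ℤ, fθ ≠ n) :
    ((Fintype.card (Fin N → (Fin K ↪ Fin M) × (Fin K ↪ Fin P)) : ℕ) : ℂ)⁻¹ *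
        (∑ sel : Fin N → (Fin K ↪ Fin M) × (Fin K ↪ Fin P),
          chi N K M P Qr sel fr fv fθ) =
      ((K : ℂ) / ((M : ℂ) * P)) *
        Complex.exp (-Complex.I * (Real.pi *
          (((M : ℝ) - 1) * fr + ((N : ℝ) - 1) * fv + (((P * Qr : ℕ) : ℝ) - 1) * fθ))) *
        ((Real.sin (M * Real.pi * fr) / Real.sin (Real.pi * fr) : ℝ) : ℂ) *
        ((Real.sin (N * Real.pi * fv) / Real.sin (Real.pi * fv) : ℝ) : ℂ) *
        ((Real.sin ((P * Qr : ℕ) * Real.pi * fθ) / Real.sin (Real.pi * fθ) : ℝ) : ℂ) :=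
  stmt_5_general N K M P Qr hM hP hKM hKP fr fv fθ hfr hfv hfθ
end
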